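/- arXiv:1509.00260 — 6 statements merged into one kernel-verified Lean document; each statement's English description precedes it below -/
import Mathlib

section
/- Let Φ = (1+√5)/2 be the golden mean. For every positive integer n, the fractional part of ⌊nΦ⌋·Φ satisfies {⌊nΦ⌋·Φ} = (1−Φ)·{nΦ} + 1, where {x} denotes the fractional part of x. -/
/-- The golden mean Φ = (1+√5)/2. -/
noncomputable def goldenMean : ℝ := (1 + Real.sqrt 5) / 2

/-- For every positive integer `n`, the fractional part of `⌊nΦ⌋·Φ` satisfies
`{⌊nΦ⌋·Φ} = (1 − Φ)·{nΦ} + 1`. -/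
theorem fract_floor_mul_goldenMean (n : ℕ) (hn : 0 < n) :
    Int.fract ((⌊(n : ℝ) * goldenMean⌋ : ℝ) * goldenMean) =
      (1 - goldenMean) * Int.fract ((n : ℝ) * goldenMean) + 1 := by
  have hge : goldenMean = Real.goldenRatio := rfl
  have hsq : goldenMean ^ 2 = goldenMean + 1 := by rw [hge]; exact Real.goldenRatio_sq
  have hlt2 : goldenMean < 2 := by rw [hge]; exact Real.goldenRatio_lt_two
  have hgt1 : 1 < goldenMean := by rw [hge]; exact Real.one_lt_goldenRatio
  have hir : Irrational ((n : ℝ) * goldenMean) := by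
    rw [hge]
    exact Real.goldenRatio_irrational.natCast_mul hn.ne'
  set f := Int.fract ((n : ℝ) * goldenMean) with hf
  have hf0 : 0 < f := by
    rw [hf, Int.fract_pos]
    intro h
    exact hir.ne_int ⌊(n : ℝ) * goldenMean⌋ h
  have hf1 : f < 1 := Int.fract_lt_one _
  have hfloor : (⌊(n : ℝ) * goldenMean⌋ : ℝ) = (n : ℝ) * goldenMean - f :=
    (Int.self_sub_fract _).symm
  have key : (⌊(n : ℝ) * goldenMean⌋ : ℝ) * goldenMean
      = (1 - goldenMean) * f + ((⌊(n : ℝ) * goldenMean⌋ + n : ℤ)) := by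
    rw [hfloor]
    have : (n : ℝ) * goldenMean * goldenMean = (n : ℝ) * (goldenMean + 1) := by
      rw [← hsq]; ring
    push_cast
    nlinarith [this, hfloor]
  rw [key, Int.fract_add_intCast]
  have hb1 : -1 < (1 - goldenMean) * f := by nlinarith
  have hb2 : (1 - goldenMean) * f < 0 := by nlinarith
  have hfl : ⌊(1 - goldenMean) * f⌋ = -1 := by
    rw [Int.floor_eq_iff]
    constructor <;> push_cast <;> linarith
  rw [Int.fract, hfl]
  push_cast
  ring
end

section
/- Let Φ = (1+√5)/2 be the golden mean. For every positive integer n: {⌊nΦ⌋·Φ} < Φ − 1 if and only if {⌊nΦ⌋·Φ} < {nΦ}, where {x} denotes the fractional part of x. -/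
lemma goldenMean_eq : goldenMean = Real.goldenRatio := rfl

/-- For every positive integer `n`:
`{⌊nΦ⌋·Φ} < Φ − 1` if and only if `{⌊nΦ⌋·Φ} < {nΦ}`. -/
theorem fract_floor_mul_goldenMean_lt_iff (n : ℕ) (hn : 0 < n) :
    Int.fract ((⌊(n : ℝ) * goldenMean⌋ : ℝ) * goldenMean) < goldenMean - 1 ↔
      Int.fract ((⌊(n : ℝ) * goldenMean⌋ : ℝ) * goldenMean) <
        Int.fract ((n : ℝ) * goldenMean) := by
  rw [goldenMean_eq]
  set φ := Real.goldenRatio with hφ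
  have hsq : φ ^ 2 = φ + 1 := Real.goldenRatio_sq
  have h1 : 1 < φ := Real.one_lt_goldenRatio
  have h2 : φ < 2 := by
    have h5 : Real.sqrt 5 < 3 := by
      rw [show (3:ℝ) = Real.sqrt 9 by
        rw [show (9:ℝ) = 3^2 by norm_num, Real.sqrt_sq]; norm_num]
      exact Real.sqrt_lt_sqrt (by norm_num) (by norm_num)
    rw [hφ, Real.goldenRatio]; linarith
  set m : ℤ := ⌊(n : ℝ) * φ⌋ with hm
  set f : ℝ := Int.fract ((n : ℝ) * φ) with hf
  have hfloor : (n : ℝ) * φ = (m : ℝ) + f := by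
    rw [hf, hm]; exact (Int.floor_add_fract _).symm
  have hf1 : f < 1 := Int.fract_lt_one _
  have hf0 : 0 < f := by
    rw [hf, Int.fract_pos]
    intro h
    have hirr : Irrational ((n : ℝ) * φ) :=
      Irrational.natCast_mul Real.goldenRatio_irrational hn.ne'
    exact hirr ⟨⌊(n : ℝ) * φ⌋, h.symm⟩
  -- key: m * φ = (m + n - 1) + (1 - f * (φ - 1))
  have hkey : (m : ℝ) * φ = ((m + n - 1 : ℤ) : ℝ) + (1 - f * (φ - 1)) := by
    have : (m : ℝ) * φ = ((n : ℝ) * φ - f) * φ := by rw [hfloor]; ring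
    rw [this]
    have : (n : ℝ) * φ * φ = (n : ℝ) * (φ + 1) := by
      have := hsq; nlinarith [hsq]
    push_cast
    nlinarith [hfloor]
  have hfr : Int.fract ((m : ℝ) * φ) = 1 - f * (φ - 1) := by
    rw [hkey, Int.fract_intCast_add, Int.fract_eq_self.mpr]
    constructor
    · nlinarith
    · nlinarith
  rw [hfr]
  constructor
  · intro h; nlinarith
  · intro h; nlinarith
end

section
/- Let Φ = (1+√5)/2 be the golden mean. For every positive integer n, ⌊⌊nΦ⌋·Φ⌋ = ⌊nΦ⌋ + n − 1. -/
lemma goldenMean_sq : goldenMean ^ 2 = goldenMean + 1 := by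
  have h5 : Real.sqrt 5 ^ 2 = 5 := Real.sq_sqrt (by norm_num)
  unfold goldenMean
  ring_nf
  nlinarith [h5]

lemma goldenMean_irrational : Irrational goldenMean := by
  have h : Irrational (Real.sqrt 5) := by
    have : Nat.Prime 5 := by norm_num
    simpa using this.irrational_sqrt
  unfold goldenMean
  have := (h.ratCast_add 1).ratCast_mul (q := 1/2) (by norm_num : (1/2:ℚ) ≠ 0)
  convert this using 1
  push_cast
  ring

lemma goldenMean_gt_one : 1 < goldenMean := by
  have : 2 < Real.sqrt 5 := by
    nlinarith [Real.sq_sqrt (show (5:ℝ) ≥ 0 by norm_num), Real.sqrt_nonneg 5]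
  unfold goldenMean; linarith

lemma goldenMean_lt_two : goldenMean < 2 := by
  have : Real.sqrt 5 < 3 := by
    nlinarith [Real.sq_sqrt (show (5:ℝ) ≥ 0 by norm_num), Real.sqrt_nonneg 5]
  unfold goldenMean; linarith

/-- For every positive integer `n`, `⌊⌊nΦ⌋·Φ⌋ = ⌊nΦ⌋ + n − 1`. -/
theorem floor_floor_mul_goldenMean (n : ℕ) (hn : 0 < n) :
    ⌊(⌊(n : ℝ) * goldenMean⌋ : ℝ) * goldenMean⌋ = ⌊(n : ℝ) * goldenMean⌋ + n - 1 := by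
  set Φ := goldenMean with hΦ
  set m : ℤ := ⌊(n : ℝ) * Φ⌋ with hm
  have hirr : Irrational ((n : ℝ) * Φ) := by
    have := goldenMean_irrational
    simpa using (this.natCast_mul hn.ne')
  have hlt : (m : ℝ) < (n : ℝ) * Φ := by
    rcases lt_or_eq_of_le (Int.floor_le ((n : ℝ) * Φ)) with h | h
    · exact h
    · exact absurd h.symm (hirr.ne_int m)
  have hub : (n : ℝ) * Φ < (m : ℝ) + 1 := Int.lt_floor_add_one _
  have hsq : Φ ^ 2 = Φ + 1 := goldenMean_sq
  have h1 : 1 < Φ := goldenMean_gt_one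
  have h2 : Φ < 2 := goldenMean_lt_two
  have key : (m : ℝ) + n - 1 < (m : ℝ) * Φ ∧ (m : ℝ) * Φ < (m : ℝ) + n := by
    constructor <;> nlinarith [hlt, hub, hsq, h1, h2]
  have : ⌊(m : ℝ) * Φ⌋ = m + n - 1 := by
    rw [Int.floor_eq_iff]
    constructor
    · push_cast; linarith [key.1]
    · push_cast; linarith [key.2]
  simpa using this
end

section
/- Let Φ = (1+√5)/2 be the golden mean. For every positive integer n, ⌊Φ·⌊n/Φ⌋⌋ = ⌊(⌊nΦ⌋ − 1)/Φ⌋. -/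
/-- For every positive integer `n`, `⌊Φ·⌊n/Φ⌋⌋ = ⌊(⌊nΦ⌋ − 1)/Φ⌋`. -/
theorem floor_goldenMean_floor_div (n : ℕ) (hn : 0 < n) :
    ⌊goldenMean * (⌊(n : ℝ) / goldenMean⌋ : ℝ)⌋ =
      ⌊((⌊(n : ℝ) * goldenMean⌋ : ℝ) - 1) / goldenMean⌋ := by
  have hs : Real.sqrt 5 ^ 2 = 5 := Real.sq_sqrt (by norm_num)
  have hs2 : 2 < Real.sqrt 5 := by
    nlinarith [Real.sqrt_nonneg 5]
  have hs3 : Real.sqrt 5 < 3 := by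
    nlinarith [Real.sqrt_nonneg 5]
  set φ := goldenMean with hφdef
  have hφ1 : 1 < φ := by rw [hφdef, goldenMean]; linarith
  have hφ2 : φ < 2 := by rw [hφdef, goldenMean]; linarith
  have hφpos : 0 < φ := by linarith
  have hsq : φ ^ 2 = φ + 1 := by
    rw [hφdef, goldenMean]; nlinarith [hs]
  -- irrationality
  have hirr : Irrational φ := by
    rw [hφdef, goldenMean]
    have h5 : Irrational (Real.sqrt 5) := (Nat.prime_five).irrational_sqrt
    have := (h5.natCast_add 1).div_natCast (m := 2) (by norm_num)
    simpa using this
  have hnφirr : Irrational ((n : ℝ) * φ) := hirr.natCast_mul hn.ne'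
  set m : ℤ := ⌊(n : ℝ) * φ⌋ with hmdef
  set f : ℝ := (n : ℝ) * φ - m with hfdef
  have hf0 : 0 < f := by
    have : (n : ℝ) * φ ≠ m := hnφirr.ne_int m
    have hle : (m : ℝ) ≤ (n : ℝ) * φ := Int.floor_le _
    rcases lt_or_eq_of_le hle with h | h
    · rw [hfdef]; linarith
    · exact absurd h.symm this
  have hf1 : f < 1 := by
    have := Int.lt_floor_add_one ((n : ℝ) * φ)
    rw [hfdef]; push_cast at this ⊢; linarith
  -- inner floor: ⌊n/φ⌋ = m - n
  have hdiv : (n : ℝ) / φ = (n : ℝ) * φ - n := by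
    rw [div_eq_iff hφpos.ne']
    linear_combination (-(n : ℝ)) * hsq
  have hinner : ⌊(n : ℝ) / φ⌋ = m - n := by
    rw [hdiv, hmdef]
    exact_mod_cast Int.floor_sub_natCast ((n : ℝ) * φ) n
  rw [hinner]
  -- LHS argument
  have hL : φ * ((m - (n : ℤ) : ℤ) : ℝ) = (n : ℝ) - f * φ := by
    push_cast
    have hm : (m : ℝ) = (n : ℝ) * φ - f := by rw [hfdef]; ring
    rw [hm]
    linear_combination (n : ℝ) * hsq
  -- RHS argument
  have hR : ((m : ℝ) - 1) / φ = (n : ℝ) - (f + 1) * (φ - 1) := by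
    rw [div_eq_iff hφpos.ne']
    have hm : (m : ℝ) = (n : ℝ) * φ - f := by rw [hfdef]; ring
    rw [hm]
    linear_combination ((f : ℝ) + 1) * hsq
  rw [hL, hR]
  have hprod : (φ - 1) * φ = 1 := by linear_combination hsq
  clear hirr hnφirr hdiv hinner hL hR
  have key : ∀ (t : ℝ) (j : ℤ), (j : ℝ) ≤ (n : ℝ) - t → (n : ℝ) - t < j + 1 →
      ⌊(n : ℝ) - t⌋ = j := fun t j h1 h2 => Int.floor_eq_iff.mpr ⟨h1, h2⟩
  rcases le_or_gt f (φ - 1) with hc | hc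
  · -- both floors equal n - 1
    have b1 : f * φ ≤ 1 := by nlinarith [hprod]
    have b2 : 0 < f * φ := mul_pos hf0 hφpos
    have b3 : (f + 1) * (φ - 1) ≤ 1 := by nlinarith [hprod]
    have b4 : 0 < (f + 1) * (φ - 1) := by nlinarith
    have h1 : ⌊(n : ℝ) - f * φ⌋ = (n : ℤ) - 1 := by
      apply key <;> push_cast <;> linarith
    have h2 : ⌊(n : ℝ) - (f + 1) * (φ - 1)⌋ = (n : ℤ) - 1 := by
      apply key <;> push_cast <;> linarith
    rw [h1, h2]
  · -- both floors equal n - 2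
    have b1 : 1 < f * φ := by nlinarith [hprod]
    have b2 : f * φ ≤ 2 := by nlinarith
    have b3 : 1 < (f + 1) * (φ - 1) := by nlinarith [hprod]
    have b4 : (f + 1) * (φ - 1) ≤ 2 := by nlinarith
    have h1 : ⌊(n : ℝ) - f * φ⌋ = (n : ℤ) - 2 := by
      apply key <;> push_cast <;> linarith
    have h2 : ⌊(n : ℝ) - (f + 1) * (φ - 1)⌋ = (n : ℤ) - 2 := by
      apply key <;> push_cast <;> linarith
    rw [h1, h2]
end

section
/- Let Φ = (1+√5)/2 be the golden mean. For every positive integer n, ⌊Φ·⌊nΦ⌋ − nΦ + ⌊nΦ⌋⌋ = ⌊Φ·⌊nΦ⌋ − Φ + 1⌋ (floors of real numbers on both sides). -/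
/-- For every positive integer `n`,
`⌊Φ·⌊nΦ⌋ − nΦ + ⌊nΦ⌋⌋ = ⌊Φ·⌊nΦ⌋ − Φ + 1⌋`. -/
theorem floor_eq_floor_goldenMean (n : ℕ) (hn : 0 < n) :
    ⌊goldenMean * (⌊(n : ℝ) * goldenMean⌋ : ℝ) - (n : ℝ) * goldenMean +
        (⌊(n : ℝ) * goldenMean⌋ : ℝ)⌋ =
      ⌊goldenMean * (⌊(n : ℝ) * goldenMean⌋ : ℝ) - goldenMean + 1⌋ := by
  have h5 : Real.sqrt 5 ^ 2 = 5 := Real.sq_sqrt (by norm_num)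
  have hs2 : 2 < Real.sqrt 5 := by nlinarith [Real.sqrt_nonneg 5]
  have hs3 : Real.sqrt 5 < 3 := by nlinarith [Real.sqrt_nonneg 5]
  set φ := goldenMean with hφdef
  have hφ2 : φ ^ 2 = φ + 1 := by
    rw [hφdef]; unfold goldenMean; field_simp; nlinarith [h5]
  have hφ1 : 1 < φ := by rw [hφdef]; unfold goldenMean; linarith
  have hφlt : φ < 2 := by rw [hφdef]; unfold goldenMean; linarith
  have hirr5 : Irrational (Real.sqrt 5) := by
    have hns : ¬ IsSquare (5 : ℕ) := by
      rintro ⟨k, hk⟩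
      have hk2 : k ≤ 2 := by nlinarith
      interval_cases k <;> omega
    have := irrational_sqrt_natCast_iff.mpr hns
    norm_num at this
    norm_num
  have hirrφ : Irrational φ := by
    rw [hφdef]; unfold goldenMean
    have h1 : Irrational (1 + Real.sqrt 5) := by
      have := hirr5.ratCast_add (q := 1)
      simpa using this
    have := h1.div_natCast (m := 2) (by norm_num)
    simpa using this
  have hirrn : Irrational ((n : ℝ) * φ) := hirrφ.natCast_mul hn.ne'
  set m : ℤ := ⌊(n : ℝ) * φ⌋ with hm
  have hf0 : (m : ℝ) ≤ (n : ℝ) * φ := Int.floor_le _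
  have hf1 : (n : ℝ) * φ < (m : ℝ) + 1 := Int.lt_floor_add_one _
  have hne : (m : ℝ) < (n : ℝ) * φ := lt_of_le_of_ne hf0 (fun h => (hirrn.ne_int m) h.symm)
  set f : ℝ := (n : ℝ) * φ - (m : ℝ) with hfdef
  have hfpos : 0 < f := by simp [hfdef]; linarith
  have hflt : f < 1 := by simp [hfdef]; linarith
  have hA : φ * (m : ℝ) - (n : ℝ) * φ + (m : ℝ) = (n : ℝ) + (m : ℝ) - φ * f := by
    simp only [hfdef]; ring_nf; linear_combination (n : ℝ) * hφ2
  have hB : φ * (m : ℝ) - φ + 1 = (n : ℝ) + (m : ℝ) + 1 - φ + (1 - φ) * f := by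
    simp only [hfdef]; ring_nf; linear_combination (n : ℝ) * hφ2
  rw [hA, hB]
  rcases le_or_gt f (φ - 1) with hcase | hcase
  · have e1 : ⌊(n : ℝ) + (m : ℝ) - φ * f⌋ = (n : ℤ) + m - 1 := by
      rw [Int.floor_eq_iff]
      constructor
      · push_cast; nlinarith
      · push_cast; nlinarith
    have e2 : ⌊(n : ℝ) + (m : ℝ) + 1 - φ + (1 - φ) * f⌋ = (n : ℤ) + m - 1 := by
      rw [Int.floor_eq_iff]
      constructor
      · push_cast; nlinarith
      · push_cast; nlinarith
    rw [e1, e2]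
  · have e1 : ⌊(n : ℝ) + (m : ℝ) - φ * f⌋ = (n : ℤ) + m - 2 := by
      rw [Int.floor_eq_iff]
      constructor
      · push_cast; nlinarith
      · push_cast; nlinarith
    have e2 : ⌊(n : ℝ) + (m : ℝ) + 1 - φ + (1 - φ) * f⌋ = (n : ℤ) + m - 2 := by
      rw [Int.floor_eq_iff]
      constructor
      · push_cast; nlinarith
      · push_cast; nlinarith
    rw [e1, e2]
end

section
/- Let η be the monoid homomorphism on words over the alphabet {1,2,3} determined by η(1) = 123, η(2) = 12, η(3) = 123, and let θ be the monoid homomorphism determined by θ(1) = 312, θ(2) = 12, θ(3) = 312. Then for every integer n ≥ 1, the word 3·ηⁿ(1) equals the word θⁿ(1)·3 (where · denotes concatenation and ηⁿ, θⁿ are n-fold compositions). -/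
/-- The morphism η on letters: η(1) = 123, η(2) = 12, η(3) = 123. -/
def etaL : ℕ → List ℕ
  | 1 => [1, 2, 3]
  | 2 => [1, 2]
  | 3 => [1, 2, 3]
  | _ => []

/-- The morphism θ on letters: θ(1) = 312, θ(2) = 12, θ(3) = 312. -/
def thetaL : ℕ → List ℕ
  | 1 => [3, 1, 2]
  | 2 => [1, 2]
  | 3 => [3, 1, 2]
  | _ => []

/-- η extended to words as a homomorphism under concatenation. -/
def etaW (w : List ℕ) : List ℕ := w.flatMap etaL

/-- θ extended to words as a homomorphism under concatenation. -/
def thetaW (w : List ℕ) : List ℕ := w.flatMap thetaL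

lemma letter_key (a : ℕ) : [1,2] ++ thetaL a = etaL a ++ [1,2] := by
  rcases a with _ | _ | _ | _ | a <;> rfl

lemma word_key (w : List ℕ) : [1,2] ++ thetaW w = etaW w ++ [1,2] := by
  induction w with
  | nil => rfl
  | cons a t ih =>
    show [1,2] ++ (thetaL a ++ thetaW t) = (etaL a ++ etaW t) ++ [1,2]
    rw [← List.append_assoc, letter_key, List.append_assoc, ih, List.append_assoc]

/-- For every `n ≥ 1`, the word `3·ηⁿ(1)` equals the word `θⁿ(1)·3`. -/
theorem three_eta_eq_theta_three (n : ℕ) (hn : 1 ≤ n) :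
    3 :: etaW^[n] [1] = thetaW^[n] [1] ++ [3] := by
  induction n, hn using Nat.le_induction with
  | base => rfl
  | succ n hn ih =>
    rw [Function.iterate_succ_apply', Function.iterate_succ_apply']
    rcases hB : thetaW^[n] [1] with _ | ⟨b, C⟩
    · rw [hB] at ih
      simp only [List.nil_append, List.cons.injEq] at ih
      rw [ih.2]
      rfl
    · rw [hB] at ih
      simp only [List.cons_append, List.cons.injEq] at ih
      obtain ⟨hb, hA⟩ := ih
      rw [hA]
      show 3 :: etaW (C ++ [3]) = thetaW (b :: C) ++ [3]
      rw [← hb]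
      show 3 :: ((C ++ [3]).flatMap etaL) = (thetaL 3 ++ thetaW C) ++ [3]
      rw [List.flatMap_append]
      show 3 :: (etaW C ++ [1,2,3]) = ([3,1,2] ++ thetaW C) ++ [3]
      have := word_key C
      have h2 : ([3,1,2] ++ thetaW C) ++ [3] = 3 :: (([1,2] ++ thetaW C) ++ [3]) := by
        simp
      rw [h2, this]
      simp
end
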